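/- Let μ : [0,∞) → [0,∞) be continuous non-decreasing with μ(0)=0, s : [0,∞) → ℝ continuous of locally bounded variation, b : ℝ → ℝ Lipschitz, σ : ℝ → ℝ Lipschitz. Then for every x₀ ∈ ℝ there exists a unique continuous X : [0,∞) → ℝ solving X(t) = x₀ + ∫₀^t b(X(u)) dμ(u) + ∫₀^t σ(X(u)) ds(u) for all t, where both integrals are Riemann–Stieltjes integrals. -/

import Mathlib

/-!
Both integrals are taken against measures dominated by the Stieltjes measure `dG` of the continuous
non-decreasing function `G = F + s₁ + s₂`, so the right-hand side `P` of the equation satisfies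
`|P X t - P Y t| ≤ L ∫₀ᵗ |X - Y| dG`. Because `G` is continuous, comparing with Riemann sums at a
scale on which `G` oscillates by at most `1 / c` gives `∫₀ᵗ exp (c G) dG ≤ 2 exp (c G t) / c`.
Hence for `c = 4 L + 1` the map `P` halves the weighted norm `sup |X t| / exp (c G t)` on `[0, T]`:
Banach's fixed point theorem gives a solution on `[0, T]`, the same estimate gives uniqueness
(Gronwall), and the solutions on the intervals `[0, n]` glue to a global one.
-/

open Set MeasureTheory Real Filter Topology
open scoped NNReal

theorem le_of_forall_le_of_sub_lt {f : ℝ → ℝ} {a b δ : ℝ} (hδ : 0 < δ) (hab : a ≤ b)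
    (hf : ∀ s ∈ Icc a b, ∀ t ∈ Icc a b, s ≤ t → t - s < δ → f s ≤ f t) : f a ≤ f b := by
  obtain ⟨n, hn⟩ := exists_nat_gt ((b - a) / δ)
  have hn0 : (0 : ℝ) < n := (div_nonneg (sub_nonneg.2 hab) hδ.le).trans_lt hn
  set h := (b - a) / n
  have hh : 0 ≤ h := div_nonneg (sub_nonneg.2 hab) hn0.le
  have hhδ : h < δ := by rwa [div_lt_iff₀ hn0, mul_comm, ← div_lt_iff₀ hδ]
  have hmem : ∀ k ≤ n, a + k * h ∈ Icc a b := fun k hk =>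
    ⟨le_add_of_nonneg_right (by positivity), by
      have : (k : ℝ) * h ≤ n * h := mul_le_mul_of_nonneg_right (by exact_mod_cast hk) hh
      rw [mul_div_cancel₀ _ hn0.ne'] at this; linarith⟩
  have step : ∀ k ≤ n, f a ≤ f (a + k * h) := by
    intro k hk
    induction k with
    | zero => simp
    | succ k ih =>
      refine (ih (by omega)).trans (hf _ (hmem k (by omega)) _ (hmem (k + 1) hk) ?_ ?_) <;>
        push_cast <;> linarith
  simpa [h, mul_div_cancel₀ _ hn0.ne'] using step n le_rfl

theorem Real.exp_mul_sub_le {p q : ℝ} (hpq : p ≤ q) (hqp : q - p ≤ 1) :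
    exp q * (q - p) ≤ 2 * (exp q - exp p) := by
  have hx : q - p ≤ 2 * (1 - exp (-(q - p))) := by
    have h : exp (-(q - p)) * (q - p + 1) ≤ 1 := by
      calc exp (-(q - p)) * (q - p + 1) ≤ exp (-(q - p)) * exp (q - p) :=
            mul_le_mul_of_nonneg_left (add_one_le_exp _) (exp_pos _).le
        _ = 1 := by rw [← exp_add, neg_add_cancel, exp_zero]
    nlinarith [mul_nonneg (sub_nonneg.2 hpq) (sub_nonneg.2 hqp), exp_pos (-(q - p))]
  have hp : exp p = exp q * exp (-(q - p)) := by rw [← exp_add]; ring_nf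
  rw [hp]
  nlinarith [exp_pos q]

namespace StieltjesFunction

variable {G : StieltjesFunction ℝ}

theorem nullSingletonClass_measure (hG : Continuous G) : NullSingletonClass G.measure :=
  ⟨fun x => by rw [measure_singleton, hG.continuousWithinAt.leftLim_eq, sub_self,
    ENNReal.ofReal_zero]⟩

theorem setIntegral_Ioc_le_mul {f : ℝ → ℝ} {C s t : ℝ} (hst : s ≤ t)
    (hf : IntegrableOn f (Ioc s t) G.measure) (hfC : ∀ u ∈ Ioc s t, f u ≤ C) :
    ∫ u in Ioc s t, f u ∂G.measure ≤ C * (G t - G s) := by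
  calc ∫ u in Ioc s t, f u ∂G.measure ≤ ∫ u in Ioc s t, C ∂G.measure :=
        setIntegral_mono_on hf continuous_const.integrableOn_Ioc measurableSet_Ioc hfC
    _ = C * (G t - G s) := by
        rw [setIntegral_const, measureReal_def, measure_Ioc,
          ENNReal.toReal_ofReal (sub_nonneg.2 (G.mono hst)), smul_eq_mul, mul_comm]

theorem monotone_exp_mul {c : ℝ} (hc : 0 ≤ c) : Monotone fun u => exp (c * G u) :=
  fun _ _ h => exp_le_exp.2 (mul_le_mul_of_nonneg_left (G.mono h) hc)

theorem setIntegral_exp_mul_le_of_sub_le {c s t : ℝ} (hc : 0 < c) (hst : s ≤ t)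
    (hGst : c * (G t - G s) ≤ 1) :
    ∫ u in Ioc s t, exp (c * G u) ∂G.measure ≤ 2 / c * (exp (c * G t) - exp (c * G s)) := by
  have hmono := monotone_exp_mul (G := G) hc.le
  have hexp := Real.exp_mul_sub_le (mul_le_mul_of_nonneg_left (G.mono hst) hc.le)
    (by rwa [← mul_sub])
  calc ∫ u in Ioc s t, exp (c * G u) ∂G.measure ≤ exp (c * G t) * (G t - G s) :=
        setIntegral_Ioc_le_mul hst hmono.intervalIntegrable.1 fun u hu => hmono hu.2
    _ ≤ 2 / c * (exp (c * G t) - exp (c * G s)) := by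
        rw [div_mul_eq_mul_div, le_div_iff₀ hc]
        linarith

theorem setIntegral_exp_mul_le (hG : Continuous G) {c a b : ℝ} (hc : 0 < c) (hab : a ≤ b) :
    ∫ u in Ioc a b, exp (c * G u) ∂G.measure ≤ 2 / c * (exp (c * G b) - exp (c * G a)) := by
  obtain ⟨δ, hδ, hGδ⟩ := Metric.uniformContinuousOn_iff.1
    ((isCompact_Icc (a := a) (b := b)).uniformContinuousOn_of_continuous hG.continuousOn)
    (1 / c) (by positivity)
  have hint : ∀ s t, IntegrableOn (fun u => exp (c * G u)) (Ioc s t) G.measure := fun _ _ =>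
    (monotone_exp_mul hc.le).intervalIntegrable.1
  have key := le_of_forall_le_of_sub_lt
    (f := fun t => 2 / c * exp (c * G t) - ∫ u in Ioc a t, exp (c * G u) ∂G.measure) hδ hab
    fun s hs t ht hst hδst => by
      have hGst : G t - G s < 1 / c := by
        have := hGδ t ht s hs (by rwa [Real.dist_eq, abs_of_nonneg (by linarith)])
        rwa [Real.dist_eq, abs_of_nonneg (sub_nonneg.2 (G.mono hst))] at this
      have hsplit : ∫ u in Ioc a t, exp (c * G u) ∂G.measure =
          (∫ u in Ioc a s, exp (c * G u) ∂G.measure) +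
            ∫ u in Ioc s t, exp (c * G u) ∂G.measure := by
        rw [← setIntegral_union (Ioc_disjoint_Ioc_of_le le_rfl) measurableSet_Ioc
          (hint _ _) (hint _ _), Ioc_union_Ioc_eq_Ioc hs.1 hst]
      have := setIntegral_exp_mul_le_of_sub_le hc hst ((le_div_iff₀' hc).1 hGst.le)
      rw [hsplit]
      linarith
  simp only [Ioc_self, setIntegral_empty, sub_zero] at key
  rw [mul_sub]
  linarith

theorem setIntegral_le_mul_exp (hG : Continuous G) {φ : ℝ → ℝ} {c D a t : ℝ} (hc : 0 < c)
    (hD : 0 ≤ D) (hat : a ≤ t) (hφ : IntegrableOn φ (Ioc a t) G.measure)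
    (hφD : ∀ u ∈ Ioc a t, φ u ≤ D * exp (c * G u)) :
    ∫ u in Ioc a t, φ u ∂G.measure ≤ 2 * D / c * exp (c * G t) := by
  have hexp : Continuous fun u => exp (c * G u) := by fun_prop
  calc ∫ u in Ioc a t, φ u ∂G.measure ≤ ∫ u in Ioc a t, D * exp (c * G u) ∂G.measure :=
        setIntegral_mono_on hφ (hexp.const_smul D).integrableOn_Ioc measurableSet_Ioc hφD
    _ = D * ∫ u in Ioc a t, exp (c * G u) ∂G.measure := integral_const_mul _ _
    _ ≤ D * (2 / c * (exp (c * G t) - exp (c * G a))) :=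
        mul_le_mul_of_nonneg_left (setIntegral_exp_mul_le hG hc hat) hD
    _ ≤ 2 * D / c * exp (c * G t) := by
        have : 0 ≤ D * (2 / c * exp (c * G a)) := by positivity
        have e : D * (2 / c * exp (c * G t)) = 2 * D / c * exp (c * G t) := by ring
        rw [mul_sub]
        linarith

theorem eqOn_zero_of_le_mul_integral (hG : Continuous G) {L : ℝ≥0} {a T : ℝ} {φ : ℝ → ℝ}
    (hφ : ContinuousOn φ (Icc a T)) (hφ0 : ∀ t ∈ Icc a T, 0 ≤ φ t)
    (hφL : ∀ t ∈ Icc a T, φ t ≤ L * ∫ u in Ioc a t, φ u ∂G.measure) :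
    EqOn φ 0 (Icc a T) := by
  intro t ht
  set c : ℝ := 4 * L + 1
  have hc : 0 < c := by positivity
  have hexp : ∀ u, 0 < exp (c * G u) := fun u => exp_pos _
  obtain ⟨t₀, ht₀, hmax⟩ := isCompact_Icc.exists_isMaxOn ⟨t, ht⟩
    (hφ.div (by fun_prop) fun u _ => (hexp u).ne')
  set M := φ t₀ / exp (c * G t₀)
  have hM : 0 ≤ M := div_nonneg (hφ0 t₀ ht₀) (hexp t₀).le
  have hφM : ∀ u ∈ Icc a T, φ u ≤ M * exp (c * G u) := fun u hu =>
    (div_le_iff₀ (hexp u)).1 (hmax hu)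
  have hhalf : ∀ u ∈ Icc a T, φ u / exp (c * G u) ≤ M / 2 := by
    intro u hu
    have hint := setIntegral_le_mul_exp hG hc hM hu.1
      ((hφ.integrableOn_Icc).mono_set (Ioc_subset_Icc_self.trans (Icc_subset_Icc le_rfl hu.2)))
      fun v hv => hφM v ⟨hv.1.le, hv.2.trans hu.2⟩
    rw [div_le_iff₀ (hexp u)]
    calc φ u ≤ L * (2 * M / c * exp (c * G u)) :=
          (hφL u hu).trans (mul_le_mul_of_nonneg_left hint L.coe_nonneg)
      _ ≤ M / 2 * exp (c * G u) := by
          rw [← mul_assoc]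
          refine mul_le_mul_of_nonneg_right ?_ (hexp u).le
          rw [mul_div_assoc', div_le_div_iff₀ hc two_pos]
          nlinarith
  have hM0 : M ≤ 0 := by linarith [hhalf t₀ ht₀]
  have := hhalf t ht
  rw [div_le_iff₀ (hexp t)] at this
  show φ t = 0
  exact le_antisymm (by nlinarith [hexp t]) (hφ0 t ht)

end StieltjesFunction

def VolterraLipschitzWith (L : ℝ≥0) (G : StieltjesFunction ℝ) (a : ℝ)
    (P : (ℝ → ℝ) → ℝ → ℝ) : Prop :=
  ∀ X Y : ℝ → ℝ, Continuous X → Continuous Y →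
    ∀ t, |P X t - P Y t| ≤ L * ∫ u in Ioc a t, |X u - Y u| ∂G.measure

namespace VolterraLipschitzWith

variable {L : ℝ≥0} {G : StieltjesFunction ℝ} {a T : ℝ} {P : (ℝ → ℝ) → ℝ → ℝ}

theorem eqOn_Icc_of_fixedPt (hPL : VolterraLipschitzWith L G a P) (hG : Continuous G)
    {X Y : ℝ → ℝ} (hX : Continuous X) (hY : Continuous Y) (hXP : ∀ t ∈ Icc a T, X t = P X t)
    (hYP : ∀ t ∈ Icc a T, Y t = P Y t) : EqOn X Y (Icc a T) := by
  have h0 := StieltjesFunction.eqOn_zero_of_le_mul_integral hG (φ := fun t => |X t - Y t|)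
    (hX.sub hY).abs.continuousOn (fun _ _ => abs_nonneg _) fun t ht => by
      rw [hXP t ht, hYP t ht]
      exact hPL X Y hX hY t
  exact fun t ht => sub_eq_zero.1 (abs_eq_zero.1 (h0 ht))

theorem abs_sub_le_mul_exp (hPL : VolterraLipschitzWith L G a P) (hG : Continuous G)
    {c D t : ℝ} (hc : 0 < c) (hD : 0 ≤ D) (hat : a ≤ t) {X Y : ℝ → ℝ} (hX : Continuous X)
    (hY : Continuous Y) (hXY : ∀ u ∈ Ioc a t, |X u - Y u| ≤ D * exp (c * G u)) :
    |P X t - P Y t| ≤ 2 * L * D / c * exp (c * G t) := by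
  refine (hPL X Y hX hY t).trans (le_of_le_of_eq (mul_le_mul_of_nonneg_left
    (StieltjesFunction.setIntegral_le_mul_exp hG hc hD hat (hX.sub hY).abs.integrableOn_Ioc hXY)
    L.coe_nonneg) ?_)
  ring

theorem exists_fixedPt_Icc (hPL : VolterraLipschitzWith L G a P) (hG : Continuous G)
    (hPc : ∀ X, Continuous X → Continuous (P X)) (haT : a ≤ T) :
    ∃ X, Continuous X ∧ ∀ t ∈ Icc a T, X t = P X t := by
  set c : ℝ := 4 * L + 1
  have hc : 0 < c := by positivity
  let lift : C(Icc a T, ℝ) → ℝ → ℝ := fun Y => IccExtend haT fun s => exp (c * G s) * Y s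
  have hlift : ∀ Y, Continuous (lift Y) := fun Y => Continuous.Icc_extend' (by fun_prop)
  have hlift_apply : ∀ Y, ∀ s (hs : s ∈ Icc a T), lift Y s = exp (c * G s) * Y ⟨s, hs⟩ :=
    fun Y s hs => IccExtend_of_mem haT _ hs
  -- `N` is `P` conjugated by multiplication with `exp (c * G)` (Bielecki's weighted sup norm),
  -- which makes it a `1/2`-contraction.
  let N : C(Icc a T, ℝ) → C(Icc a T, ℝ) := fun Y =>
    ⟨fun s => P (lift Y) s / exp (c * G s),
      ((hPc _ (hlift Y)).comp continuous_subtype_val).div (by fun_prop) fun _ => (exp_pos _).ne'⟩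
  have hN : ContractingWith (1 / 2) N := by
    refine ⟨by norm_num, LipschitzWith.of_dist_le_mul
      fun Y₁ Y₂ => (ContinuousMap.dist_le (by positivity)).2 fun s => ?_⟩
    have hdiff : ∀ u ∈ Ioc a s, |lift Y₁ u - lift Y₂ u| ≤ dist Y₁ Y₂ * exp (c * G u) := by
      intro u hu
      have hu' : u ∈ Icc a T := ⟨hu.1.le, hu.2.trans s.2.2⟩
      rw [hlift_apply _ u hu', hlift_apply _ u hu', ← mul_sub, abs_mul, abs_of_pos (exp_pos _),
        mul_comm, ← Real.dist_eq]
      exact mul_le_mul_of_nonneg_right (ContinuousMap.dist_apply_le_dist _) (exp_pos _).le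
    change |P (lift Y₁) s / _ - P (lift Y₂) s / _| ≤ _
    rw [← sub_div, abs_div, abs_of_pos (exp_pos _), div_le_iff₀ (exp_pos _)]
    refine (hPL.abs_sub_le_mul_exp hG hc dist_nonneg s.2.1 (hlift _) (hlift _) hdiff).trans ?_
    refine mul_le_mul_of_nonneg_right ?_ (exp_pos _).le
    rw [div_le_iff₀ hc]
    push_cast
    nlinarith [dist_nonneg (x := Y₁) (y := Y₂)]
  set Y := ContractingWith.fixedPoint N hN
  refine ⟨lift Y, hlift Y, fun t ht => ?_⟩
  have hY : P (lift Y) t / exp (c * G t) = Y ⟨t, ht⟩ :=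
    DFunLike.congr_fun hN.fixedPoint_isFixedPt ⟨t, ht⟩
  rw [hlift_apply Y t ht, ← hY, mul_div_cancel₀ _ (exp_pos _).ne']

end VolterraLipschitzWith

theorem exists_continuous_eqOn_Icc_of_nat {α : Type*} [TopologicalSpace α] {X : ℕ → ℝ → α}
    (hX : ∀ n, Continuous (X n)) (hXX : ∀ n m, n ≤ m → EqOn (X n) (X m) (Icc 0 n)) :
    ∃ Y : ℝ → α, Continuous Y ∧ ∀ n, EqOn Y (X n) (Icc 0 n) := by
  refine ⟨fun t => X ⌈t⌉₊ (max t 0), continuous_iff_continuousAt.2 fun t => ?_, fun n t ht => ?_⟩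
  · have ht : t < ((⌈t⌉₊ + 1 : ℕ) : ℝ) := by push_cast; linarith [Nat.le_ceil t]
    have hlocal : (fun s => X (⌈t⌉₊ + 1) (max s 0)) =ᶠ[𝓝 t] fun s => X ⌈s⌉₊ (max s 0) := by
      filter_upwards [Iio_mem_nhds ht] with s hs
      exact (hXX _ _ (Nat.ceil_le.2 hs.le) ⟨le_max_right _ _, max_le (Nat.le_ceil s)
        (Nat.cast_nonneg _)⟩).symm
    exact ((hX _).comp (continuous_id.max continuous_const)).continuousAt.congr hlocal
  · show X ⌈t⌉₊ (max t 0) = X n t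
    rw [max_eq_left ht.1]
    exact hXX _ _ (Nat.ceil_le.2 ht.2) ⟨ht.1, Nat.le_ceil t⟩

theorem continuous_setIntegral_Ioc {E : Type*} [NormedAddCommGroup E] [NormedSpace ℝ E]
    {μ : Measure ℝ} [IsLocallyFiniteMeasure μ] [NullSingletonClass μ] {g : ℝ → E}
    (hg : Continuous g) (a : ℝ) : Continuous fun t => ∫ u in Ioc a t, g u ∂μ := by
  have h : (fun t => ∫ u in Ioc a t, g u ∂μ) = fun t => ∫ u in a..max a t, g u ∂μ := by
    ext t
    rw [intervalIntegral.integral_of_le (le_max_left a t)]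
    rcases le_total a t with h | h
    · rw [max_eq_right h]
    · rw [max_eq_left h, Ioc_self, Ioc_eq_empty (not_lt.2 h)]
  rw [h]
  exact (intervalIntegral.continuous_primitive (fun _ _ => hg.intervalIntegrable _ _) a).comp
    (continuous_const.max continuous_id)

theorem LipschitzWith.abs_integral_sub_le {α : Type*} [MeasurableSpace α] {μ : Measure α}
    {K : ℝ≥0} {f : ℝ → ℝ} (hf : LipschitzWith K f) {X Y : α → ℝ}
    (hfX : Integrable (fun u => f (X u)) μ) (hfY : Integrable (fun u => f (Y u)) μ)
    (hXY : Integrable (fun u => |X u - Y u|) μ) :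
    |∫ u, f (X u) ∂μ - ∫ u, f (Y u) ∂μ| ≤ K * ∫ u, |X u - Y u| ∂μ := by
  rw [← integral_sub hfX hfY, ← integral_const_mul]
  refine abs_integral_le_integral_abs.trans
    (integral_mono (hfX.sub hfY).abs (hXY.const_mul _) fun u => ?_)
  simpa only [Real.dist_eq] using hf.dist_le_mul (X u) (Y u)

namespace BVDrivenSDE

variable (F s1 s2 : StieltjesFunction ℝ) (b sig : ℝ → ℝ) (x₀ : ℝ)

noncomputable def picard (X : ℝ → ℝ) (t : ℝ) : ℝ :=
  x₀ + (∫ u in Ioc 0 t, b (X u) ∂F.measure) +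
    ((∫ u in Ioc 0 t, sig (X u) ∂s1.measure) - ∫ u in Ioc 0 t, sig (X u) ∂s2.measure)

variable {F s1 s2 b sig x₀}

theorem picard_congr {X Y : ℝ → ℝ} {t : ℝ} (h : EqOn X Y (Ioc 0 t)) :
    picard F s1 s2 b sig x₀ X t = picard F s1 s2 b sig x₀ Y t := by
  have hI : ∀ (μ : Measure ℝ) (f : ℝ → ℝ),
      ∫ u in Ioc 0 t, f (X u) ∂μ = ∫ u in Ioc 0 t, f (Y u) ∂μ := fun μ f =>
    setIntegral_congr_fun measurableSet_Ioc fun u hu => congrArg f (h hu)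
  simp only [picard, hI]

theorem continuous_picard (hFc : Continuous F) (hs1 : Continuous s1) (hs2 : Continuous s2)
    (hb : Continuous b) (hsig : Continuous sig) {X : ℝ → ℝ} (hX : Continuous X) :
    Continuous (picard F s1 s2 b sig x₀ X) := by
  have := F.nullSingletonClass_measure hFc
  have := s1.nullSingletonClass_measure hs1
  have := s2.nullSingletonClass_measure hs2
  exact (continuous_const.add (continuous_setIntegral_Ioc (hb.comp hX) 0)).add
    ((continuous_setIntegral_Ioc (hsig.comp hX) 0).sub
      (continuous_setIntegral_Ioc (hsig.comp hX) 0))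

theorem volterraLipschitzWith_picard {Kb Ks : ℝ≥0} (hb : LipschitzWith Kb b)
    (hsig : LipschitzWith Ks sig) :
    VolterraLipschitzWith (max Kb Ks) (F + s1 + s2) 0 (picard F s1 s2 b sig x₀) := by
  intro X Y hX hY t
  have hd : ∀ (μ : Measure ℝ) [IsLocallyFiniteMeasure μ],
      IntegrableOn (fun u => |X u - Y u|) (Ioc 0 t) μ := fun _ _ =>
    (hX.sub hY).abs.integrableOn_Ioc
  have hF := hb.abs_integral_sub_le (μ := F.measure.restrict (Ioc 0 t))
    (hb.continuous.comp hX).integrableOn_Ioc (hb.continuous.comp hY).integrableOn_Ioc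
    (hd _)
  have h1 := hsig.abs_integral_sub_le (μ := s1.measure.restrict (Ioc 0 t))
    (hsig.continuous.comp hX).integrableOn_Ioc (hsig.continuous.comp hY).integrableOn_Ioc
    (hd _)
  have h2 := hsig.abs_integral_sub_le (μ := s2.measure.restrict (Ioc 0 t))
    (hsig.continuous.comp hX).integrableOn_Ioc (hsig.continuous.comp hY).integrableOn_Ioc
    (hd _)
  have hsum : ∫ u in Ioc 0 t, |X u - Y u| ∂(F + s1 + s2).measure =
      (∫ u in Ioc 0 t, |X u - Y u| ∂F.measure) + (∫ u in Ioc 0 t, |X u - Y u| ∂s1.measure) +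
        ∫ u in Ioc 0 t, |X u - Y u| ∂s2.measure := by
    rw [StieltjesFunction.measure_add, StieltjesFunction.measure_add, Measure.restrict_add,
      Measure.restrict_add, integral_add_measure, integral_add_measure] <;>
      first | exact hd _ | exact Integrable.add_measure (hd F.measure) (hd s1.measure)
  have hKb : (Kb : ℝ) ≤ ↑(max Kb Ks) := by exact_mod_cast le_max_left _ _
  have hKs : (Ks : ℝ) ≤ ↑(max Kb Ks) := by exact_mod_cast le_max_right _ _
  rw [hsum, mul_add, mul_add]
  calc |picard F s1 s2 b sig x₀ X t - picard F s1 s2 b sig x₀ Y t|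
      ≤ |∫ u in Ioc 0 t, b (X u) ∂F.measure - ∫ u in Ioc 0 t, b (Y u) ∂F.measure| +
        |∫ u in Ioc 0 t, sig (X u) ∂s1.measure - ∫ u in Ioc 0 t, sig (Y u) ∂s1.measure| +
        |∫ u in Ioc 0 t, sig (X u) ∂s2.measure - ∫ u in Ioc 0 t, sig (Y u) ∂s2.measure| := by
        unfold picard
        refine le_of_eq_of_le ?_ ((abs_sub _ _).trans (add_le_add (abs_add_le _ _) le_rfl))
        ring_nf
    _ ≤ Kb * (∫ u in Ioc 0 t, |X u - Y u| ∂F.measure) +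
        Ks * (∫ u in Ioc 0 t, |X u - Y u| ∂s1.measure) +
        Ks * ∫ u in Ioc 0 t, |X u - Y u| ∂s2.measure := by gcongr
    _ ≤ _ := by gcongr

end BVDrivenSDE

/- A continuous path `s` of locally bounded variation is encoded by its Jordan
decomposition `s = s₁ - s₂` into continuous non-decreasing functions (Stieltjes
functions), and `∫ σ(X) ds := ∫ σ(X) ds₁ - ∫ σ(X) ds₂`. -/
theorem bv_driven_sde_exists_unique_general
    (F : StieltjesFunction ℝ) (hFc : Continuous F)
    (s1 s2 : StieltjesFunction ℝ) (hs1 : Continuous s1) (hs2 : Continuous s2)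
    (b sig : ℝ → ℝ) (Kb Ks : NNReal)
    (hb : LipschitzWith Kb b) (hsig : LipschitzWith Ks sig)
    (x₀ : ℝ) :
    ∃ X : ℝ → ℝ,
      (Continuous X ∧
        ∀ t ≥ (0 : ℝ),
          X t = x₀ + (∫ u in Ioc (0 : ℝ) t, b (X u) ∂F.measure) +
            ((∫ u in Ioc (0 : ℝ) t, sig (X u) ∂s1.measure) -
              ∫ u in Ioc (0 : ℝ) t, sig (X u) ∂s2.measure)) ∧
      ∀ Z : ℝ → ℝ, Continuous Z →
        (∀ t ≥ (0 : ℝ),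
          Z t = x₀ + (∫ u in Ioc (0 : ℝ) t, b (Z u) ∂F.measure) +
            ((∫ u in Ioc (0 : ℝ) t, sig (Z u) ∂s1.measure) -
              ∫ u in Ioc (0 : ℝ) t, sig (Z u) ∂s2.measure)) →
        ∀ t ≥ (0 : ℝ), Z t = X t := by
  have hG : Continuous (F + s1 + s2) := (hFc.add hs1).add hs2
  have hPL := BVDrivenSDE.volterraLipschitzWith_picard (F := F) (s1 := s1) (s2 := s2)
    (x₀ := x₀) hb hsig
  have hPc : ∀ X, Continuous X → Continuous (BVDrivenSDE.picard F s1 s2 b sig x₀ X) :=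
    fun _ => BVDrivenSDE.continuous_picard hFc hs1 hs2 hb.continuous hsig.continuous
  choose X hXc hXP using fun n : ℕ => hPL.exists_fixedPt_Icc hG hPc n.cast_nonneg
  obtain ⟨Y, hYc, hYX⟩ := exists_continuous_eqOn_Icc_of_nat hXc fun n m hnm =>
    hPL.eqOn_Icc_of_fixedPt hG (hXc n) (hXc m) (hXP n)
      fun t ht => hXP m t ⟨ht.1, ht.2.trans (by exact_mod_cast hnm)⟩
  have hYP : ∀ t ≥ (0 : ℝ), Y t = BVDrivenSDE.picard F s1 s2 b sig x₀ Y t := by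
    intro t ht
    obtain ⟨n, hn⟩ := exists_nat_ge t
    rw [hYX n ⟨ht, hn⟩, hXP n t ⟨ht, hn⟩]
    exact BVDrivenSDE.picard_congr fun u hu => (hYX n ⟨hu.1.le, hu.2.trans hn⟩).symm
  refine ⟨Y, ⟨hYc, hYP⟩, fun Z hZc hZP t ht => ?_⟩
  exact hPL.eqOn_Icc_of_fixedPt hG hZc hYc (fun u hu => hZP u hu.1) (fun u hu => hYP u hu.1)
    ⟨ht, le_rfl⟩

theorem bv_driven_sde_exists_unique
    (F : StieltjesFunction ℝ) (hFc : Continuous F) (hF0 : F 0 = 0)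
    (s1 s2 : StieltjesFunction ℝ) (hs1 : Continuous s1) (hs2 : Continuous s2)
    (b sig : ℝ → ℝ) (Kb Ks : NNReal)
    (hb : LipschitzWith Kb b) (hsig : LipschitzWith Ks sig)
    (x₀ : ℝ) :
    ∃ X : ℝ → ℝ,
      (Continuous X ∧
        ∀ t ≥ (0 : ℝ),
          X t = x₀ + (∫ u in Ioc (0 : ℝ) t, b (X u) ∂F.measure) +
            ((∫ u in Ioc (0 : ℝ) t, sig (X u) ∂s1.measure) -
              ∫ u in Ioc (0 : ℝ) t, sig (X u) ∂s2.measure)) ∧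
      ∀ Z : ℝ → ℝ, Continuous Z →
        (∀ t ≥ (0 : ℝ),
          Z t = x₀ + (∫ u in Ioc (0 : ℝ) t, b (Z u) ∂F.measure) +
            ((∫ u in Ioc (0 : ℝ) t, sig (Z u) ∂s1.measure) -
              ∫ u in Ioc (0 : ℝ) t, sig (Z u) ∂s2.measure)) →
        ∀ t ≥ (0 : ℝ), Z t = X t :=
  bv_driven_sde_exists_unique_general F hFc s1 s2 hs1 hs2 b sig Kb Ks hb hsig x₀
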